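/- arXiv:1511.03828 — 11 statements merged into one kernel-verified Lean document; each statement's English description precedes it below -/
import Mathlib

section
/- The family K(r,n,a,d) := ⋃_{i=0}^{⌊d/u⌋} D(U(a+i·1, d−ui)), where u = n−r+1, is r-wise s-union: for any r vectors x₁,…,x_r ∈ K, the weight of their coordinatewise maximum x₁∨⋯∨x_r is at most s. -/
/-!
Write `xₜ ≤ a + iₜ·1 + εₜ` and let `m = max iₜ`, attained at `t₁`. Every `xₜ` lies below
`a + m·1 + (εₜ - (m - iₜ))₊`: raising the level from `iₜ` to `m` is paid for by the
excess vector. Each excess has weight at most `d - m`, because either it vanishes or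
`m - iₜ` is subtracted from a coordinate of `εₜ` in full, while the excess of `x_{t₁}` is
`ε_{t₁}` itself, of weight `d - u·m`. Summing, the join has weight at most
`|a| + n·m + (d - u·m) + (r - 1)(d - m) ≤ |a| + r·d`, since `n ≤ u + r - 1`.
-/

open Finset

lemma sum_tsub_add_le_sum {κ : Type*} {s : Finset κ} {ε : κ → ℕ} {c : ℕ} {j₀ : κ}
    (hj₀ : j₀ ∈ s) (hc : c ≤ ε j₀) : ∑ j ∈ s, (ε j - c) + c ≤ ∑ j ∈ s, ε j := by
  classical
  rw [← add_sum_erase s _ hj₀, ← add_sum_erase s _ hj₀]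
  have : ∑ j ∈ s.erase j₀, (ε j - c) ≤ ∑ j ∈ s.erase j₀, ε j :=
    sum_le_sum fun j _ => Nat.sub_le _ _
  omega

lemma sum_tsub_tsub_add_le {κ : Type*} [Fintype κ] {ε : κ → ℕ} {i m d : ℕ}
    (hε : ∑ j, ε j + i ≤ d) (him : i ≤ m) (hmd : m ≤ d) :
    ∑ j, (ε j - (m - i)) + m ≤ d := by
  by_cases hsmall : ∀ j, ε j ≤ m - i
  · rw [sum_eq_zero fun j _ => Nat.sub_eq_zero_of_le (hsmall j)]
    omega
  · push Not at hsmall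
    obtain ⟨j₀, hj₀⟩ := hsmall
    have := sum_tsub_add_le_sum (mem_univ j₀) hj₀.le
    omega

lemma le_add_sup_add_sum_tsub {ι κ : Type*} [Fintype ι] {a : κ → ℕ} {i : ι → ℕ}
    {ε : ι → κ → ℕ} {x : ι → κ → ℕ} (hx : ∀ t, x t ≤ fun j => a j + i t + ε t j) (j : κ) :
    univ.sup (fun t => x t j) ≤ a j + univ.sup i + ∑ t, (ε t j - (univ.sup i - i t)) := by
  refine Finset.sup_le fun t _ => ?_
  have him : i t ≤ univ.sup i := le_sup (mem_univ t)
  have hterm : ε t j - (univ.sup i - i t) ≤ ∑ t, (ε t j - (univ.sup i - i t)) :=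
    single_le_sum (f := fun t => ε t j - (univ.sup i - i t)) (fun _ _ => Nat.zero_le _)
      (mem_univ t)
  have : x t j ≤ a j + i t + ε t j := hx t j
  omega

lemma sum_sum_tsub_add_le {ι κ : Type*} [Fintype ι] [Fintype κ] {i : ι → ℕ}
    {ε : ι → κ → ℕ} {u d : ℕ} (hu : 0 < u) (hε : ∀ t, ∑ j, ε t j + u * i t ≤ d) :
    ∑ t, ∑ j, (ε t j - (univ.sup i - i t)) + (u + Fintype.card ι - 1) * univ.sup i
      ≤ Fintype.card ι * d := by
  classical
  cases isEmpty_or_nonempty ι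
  · simp
  obtain ⟨t₁, -, ht₁⟩ := exists_mem_eq_sup univ univ_nonempty i
  set m := univ.sup i
  have hmd : m ≤ d := calc
    m ≤ u * m := Nat.le_mul_of_pos_left m hu
    _ = u * i t₁ := by rw [ht₁]
    _ ≤ d := le_of_add_le_right (hε t₁)
  have hrest : ∀ t ∈ univ.erase t₁, ∑ j, (ε t j - (m - i t)) + m ≤ d := fun t _ =>
    have hit : i t ≤ u * i t := Nat.le_mul_of_pos_left (i t) hu
    sum_tsub_tsub_add_le (by linarith [hε t]) (le_sup (mem_univ t)) hmd
  set k := (univ.erase t₁).card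
  have hcard : Fintype.card ι = k + 1 := (card_erase_add_one (mem_univ t₁)).symm
  have hrest_sum : ∑ t ∈ univ.erase t₁, ∑ j, (ε t j - (m - i t)) + k * m ≤ k * d := by
    simpa only [sum_add_distrib, sum_const, smul_eq_mul] using sum_le_sum hrest
  have htop : ∑ j, (ε t₁ j - (m - i t₁)) + u * m ≤ d := by
    simpa [← ht₁] using hε t₁
  rw [← add_sum_erase _ _ (mem_univ t₁), hcard, show u + (k + 1) - 1 = u + k by omega]
  linarith

theorem sum_sup_le_of_le_add {ι κ : Type*} [Fintype ι] [Fintype κ] {a : κ → ℕ} {i : ι → ℕ}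
    {ε : ι → κ → ℕ} {x : ι → κ → ℕ} {u d : ℕ} (hu : 0 < u)
    (hcard : Fintype.card κ + 1 ≤ u + Fintype.card ι)
    (hε : ∀ t, ∑ j, ε t j + u * i t ≤ d) (hx : ∀ t, x t ≤ fun j => a j + i t + ε t j) :
    ∑ j, univ.sup (fun t => x t j) ≤ ∑ j, a j + Fintype.card ι * d := by
  set m := univ.sup i
  have hbound : ∑ t, ∑ j, (ε t j - (m - i t)) + (u + Fintype.card ι - 1) * m
      ≤ Fintype.card ι * d := sum_sum_tsub_add_le hu hε
  have hnm : Fintype.card κ * m ≤ (u + Fintype.card ι - 1) * m :=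
    Nat.mul_le_mul_right m (by omega)
  calc ∑ j, univ.sup (fun t => x t j)
      ≤ ∑ j, (a j + m + ∑ t, (ε t j - (m - i t))) :=
        sum_le_sum fun j _ => le_add_sup_add_sum_tsub hx j
    _ = ∑ j, a j + Fintype.card κ * m + ∑ t, ∑ j, (ε t j - (m - i t)) := by
        rw [sum_add_distrib, sum_add_distrib, sum_const, smul_eq_mul, card_univ, sum_comm]
    _ ≤ ∑ j, a j + Fintype.card ι * d := by omega

theorem stmt0_general (n r s d : ℕ)
    (a : Fin n → ℕ) (ha : (∑ i, a i) + r * d = s)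
    (K : Set (Fin n → ℕ))
    (hK : K = {x | ∃ i ≤ d / (n - r + 1), ∃ ε : Fin n → ℕ,
      (∑ j, ε j) = d - (n - r + 1) * i ∧ x ≤ fun j => a j + i + ε j})
    (f : Fin r → (Fin n → ℕ)) (hf : ∀ t, f t ∈ K) :
    (∑ j, Finset.univ.sup fun t => f t j) ≤ s := by
  simp only [hK, Set.mem_ofPred_eq] at hf
  choose i hi ε hε hle using hf
  have hweight : ∀ t, ∑ j, ε t j + (n - r + 1) * i t ≤ d := fun t => by
    have := (Nat.mul_le_mul_left (n - r + 1) (hi t)).trans (Nat.mul_div_le d (n - r + 1))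
    rw [hε t]
    omega
  have := sum_sup_le_of_le_add (Nat.succ_pos _) (by simp only [Fintype.card_fin]; omega) hweight hle
  simpa [← ha] using this

/-- The family `K(r,n,a,d)` is `r`-wise `s`-union. Here `K` is the union over
`0 ≤ i ≤ ⌊d/u⌋` (with `u = n-r+1`) of the down-sets of the spheres
`U(a + i·1, d - u·i)`, and `|a| = s - r·d`. -/
theorem stmt0 (n r s d : ℕ) (hr : 2 ≤ r) (hn : r ≤ n)
    (a : Fin n → ℕ) (ha : (∑ i, a i) + r * d = s)
    (K : Set (Fin n → ℕ))
    (hK : K = {x | ∃ i ≤ d / (n - r + 1), ∃ ε : Fin n → ℕ,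
      (∑ j, ε j) = d - (n - r + 1) * i ∧ x ≤ fun j => a j + i + ε j})
    (f : Fin r → (Fin n → ℕ)) (hf : ∀ t, f t ∈ K) :
    (∑ j, Finset.univ.sup fun t => f t j) ≤ s :=
  stmt0_general n r s d a ha K hK f hf
end

section
/- Every element of K(r,n,a,d) satisfies the linear inequalities defining the polytope P: each coordinate is non-negative, and for every subset I ⊆ [n] with 1 ≤ |I| ≤ n−r+1, the sum of coordinates over I is at most (∑_{i∈I} a_i) + d. In other words, K ⊆ L, where L is the set of integer lattice points of P. -/
open Finset

theorem sum_le_sum_add_card_mul_add_sum_of_le {ι : Type*} [Fintype ι] {a ε x : ι → ℕ} {c : ℕ}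
    (hx : x ≤ fun j => a j + c + ε j) (I : Finset ι) :
    ∑ j ∈ I, x j ≤ ∑ j ∈ I, a j + #I * c + ∑ j, ε j :=
  calc ∑ j ∈ I, x j ≤ ∑ j ∈ I, (a j + c + ε j) := sum_le_sum fun j _ => hx j
    _ = ∑ j ∈ I, a j + #I * c + ∑ j ∈ I, ε j := by
        rw [sum_add_distrib, sum_add_distrib, sum_const, smul_eq_mul]
    _ ≤ ∑ j ∈ I, a j + #I * c + ∑ j, ε j := by gcongr; exact subset_univ I

theorem stmt1_general (n r d : ℕ)
    (a : Fin n → ℕ)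
    (K : Set (Fin n → ℕ))
    (hK : K = {x | ∃ i ≤ d / (n - r + 1), ∃ ε : Fin n → ℕ,
      (∑ j, ε j) = d - (n - r + 1) * i ∧ x ≤ fun j => a j + i + ε j}) :
    ∀ x ∈ K, ∀ I : Finset (Fin n), 1 ≤ I.card → I.card ≤ n - r + 1 →
      ∑ i ∈ I, x i ≤ (∑ i ∈ I, a i) + d := by
  subst hK
  rintro x ⟨i, hi, ε, hε, hx⟩ I - hI
  have hui : (n - r + 1) * i ≤ d := (Nat.mul_le_mul_left _ hi).trans (Nat.mul_div_le d _)
  calc ∑ j ∈ I, x j ≤ ∑ j ∈ I, a j + #I * i + ∑ j, ε j :=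
        sum_le_sum_add_card_mul_add_sum_of_le hx I
    _ ≤ ∑ j ∈ I, a j + (n - r + 1) * i + (d - (n - r + 1) * i) := by rw [hε]; gcongr
    _ = ∑ j ∈ I, a j + d := by omega

/-- `K ⊆ L`: every element of `K(r,n,a,d)` satisfies the defining inequalities
of the polytope `P`: nonnegative coordinates (automatic in `ℕ`), and for every
`I ⊆ [n]` with `1 ≤ |I| ≤ n-r+1`, `∑_{i∈I} x_i ≤ ∑_{i∈I} a_i + d`. -/
theorem stmt1 (n r s d : ℕ) (hr : 2 ≤ r) (hn : r ≤ n)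
    (a : Fin n → ℕ) (ha : (∑ i, a i) + r * d = s)
    (K : Set (Fin n → ℕ))
    (hK : K = {x | ∃ i ≤ d / (n - r + 1), ∃ ε : Fin n → ℕ,
      (∑ j, ε j) = d - (n - r + 1) * i ∧ x ≤ fun j => a j + i + ε j}) :
    ∀ x ∈ K, ∀ I : Finset (Fin n), 1 ≤ I.card → I.card ≤ n - r + 1 →
      ∑ i ∈ I, x i ≤ (∑ i ∈ I, a i) + d :=
  stmt1_general n r d a K hK
end

section
/- Every integer lattice point of the polytope P lies in K(r,n,a,d): if x ∈ ℕⁿ satisfies ∑_{i∈I} x_i ≤ (∑_{i∈I} a_i) + d for every I ⊆ [n] with 1 ≤ |I| ≤ n−r+1, then there exists i' with 0 ≤ i' ≤ ⌊d/(n−r+1)⌋ such that |x \ (a + i'·1)| ≤ d − (n−r+1)·i'. In other words, L ⊆ K. -/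
/-! If `e = x \ a` has `∑_{j ∈ I} e_j ≤ d` for all `|I| ≤ u = n - r + 1`, take `T` a set of `u`
coordinates carrying the largest values of `e` and `i' = min_{j ∈ T} e_j`. Then `u i' ≤ ∑_T e ≤ d`,
every coordinate outside `T` satisfies `e_j ≤ i'`, so `|x \ (a + i'·1)| = ∑_T (e_j - i') ≤ d - u i'`.
When `n < u`, `i' = 0` already works. -/

open Finset

/-- A `u`-subset maximising `∑_T e` dominates its complement: otherwise an exchange increases it. -/
theorem Finset.exists_card_eq_forall_le_of_notMem {ι α : Type*} [DecidableEq ι]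
    [AddCommMonoid α] [LinearOrder α] [IsOrderedCancelAddMonoid α]
    (s : Finset ι) (e : ι → α) {u : ℕ}
    (hu : u ≤ s.card) :
    ∃ T ⊆ s, T.card = u ∧ ∀ j ∈ s, j ∉ T → ∀ k ∈ T, e j ≤ e k := by
  obtain ⟨T, hTmem, hTmax⟩ :=
    exists_max_image (s.powersetCard u) (fun T => ∑ j ∈ T, e j) (powersetCard_nonempty.2 hu)
  obtain ⟨hTs, hTcard⟩ := mem_powersetCard.1 hTmem
  refine ⟨T, hTs, hTcard, fun j hjs hj k hk => le_of_not_gt fun hlt => ?_⟩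
  have hj' : j ∉ T.erase k := fun hm => hj (mem_of_mem_erase hm)
  have hswap : insert j (T.erase k) ∈ s.powersetCard u := by
    refine mem_powersetCard.2 ⟨insert_subset hjs ((erase_subset k T).trans hTs), ?_⟩
    rw [card_insert_of_notMem hj', card_erase_of_mem hk, hTcard]
    have : 0 < T.card := card_pos.2 ⟨k, hk⟩
    omega
  have hle := hTmax _ hswap
  rw [sum_insert hj', ← add_sum_erase T e hk] at hle
  exact hlt.not_ge (le_of_add_le_add_right hle)

theorem Finset.sum_tsub_le_of_forall_sum_le_sum_add {ι : Type*} {x a : ι → ℕ} {u d : ℕ}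
    (hx : ∀ I : Finset ι, 1 ≤ I.card → I.card ≤ u → ∑ i ∈ I, x i ≤ (∑ i ∈ I, a i) + d)
    (I : Finset ι) (hI : I.card ≤ u) : ∑ i ∈ I, (x i - a i) ≤ d := by
  set J := I.filter fun i => a i < x i
  have hJ : ∑ i ∈ I, (x i - a i) = ∑ i ∈ J, x i - ∑ i ∈ J, a i := by
    rw [← sum_tsub_distrib _ fun i hi => (mem_filter.1 hi).2.le, sum_filter_of_ne]
    intro i _ hi
    exact Nat.lt_of_sub_ne_zero hi
  rw [hJ, tsub_le_iff_left]
  rcases J.eq_empty_or_nonempty with hJe | hJne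
  · simp [hJe]
  · exact hx J (card_pos.2 hJne) ((card_filter_le _ _).trans hI)

theorem exists_mul_le_and_sum_tsub_le {ι : Type*} [Fintype ι] {e : ι → ℕ} {u d : ℕ}
    (hu : 0 < u) (he : ∀ I : Finset ι, I.card ≤ u → ∑ i ∈ I, e i ≤ d) :
    ∃ t, u * t ≤ d ∧ ∑ i, (e i - t) ≤ d - u * t := by
  classical
  rcases lt_or_ge (Fintype.card ι) u with hlt | hge
  · exact ⟨0, by simp, by simpa using he univ (by rw [card_univ]; exact hlt.le)⟩
  obtain ⟨T, -, hTcard, hTtop⟩ :=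
    exists_card_eq_forall_le_of_notMem univ e (u := u) (by rwa [card_univ])
  obtain ⟨k, hkT, hkmin⟩ := T.exists_min_image e (card_pos.1 (hTcard ▸ hu))
  have hTsum : u * e k ≤ ∑ i ∈ T, e i := by
    simpa [hTcard] using T.card_nsmul_le_sum e (e k) hkmin
  have hTd := he T hTcard.le
  refine ⟨e k, hTsum.trans hTd, ?_⟩
  have hout : ∀ i ∉ T, e i - e k = 0 := fun i hi =>
    Nat.sub_eq_zero_of_le (hTtop i (mem_univ i) hi k hkT)
  calc ∑ i, (e i - e k) = ∑ i ∈ T, (e i - e k) :=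
        (sum_subset (subset_univ T) fun i _ hi => hout i hi).symm
    _ = ∑ i ∈ T, e i - u * e k := by
        rw [sum_tsub_distrib _ hkmin, sum_const, hTcard, smul_eq_mul]
    _ ≤ d - u * e k := Nat.sub_le_sub_right hTd _

theorem stmt2_general (n r d : ℕ)
    (a : Fin n → ℕ)
    (x : Fin n → ℕ)
    (hx : ∀ I : Finset (Fin n), 1 ≤ I.card → I.card ≤ n - r + 1 →
      ∑ i ∈ I, x i ≤ (∑ i ∈ I, a i) + d) :
    ∃ i' ≤ d / (n - r + 1),
      (∑ j, (x j - (a j + i'))) ≤ d - (n - r + 1) * i' := by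
  obtain ⟨t, hut, ht⟩ := exists_mul_le_and_sum_tsub_le (n - r).succ_pos
    (sum_tsub_le_of_forall_sum_le_sum_add hx)
  refine ⟨t, (Nat.le_div_iff_mul_le (n - r).succ_pos).2 (mul_comm t _ ▸ hut), ?_⟩
  simpa only [Nat.sub_add_eq] using ht

/-- `L ⊆ K`: if `x ∈ ℕⁿ` satisfies `∑_{i∈I} x_i ≤ ∑_{i∈I} a_i + d` for all
`I ⊆ [n]` with `1 ≤ |I| ≤ n-r+1`, then there is `i'` with
`0 ≤ i' ≤ ⌊d/(n-r+1)⌋` and `|x \ (a + i'·1)| ≤ d - (n-r+1)·i'`. -/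
theorem stmt2 (n r s d : ℕ) (hr : 2 ≤ r) (hn : r ≤ n)
    (a : Fin n → ℕ) (ha : (∑ i, a i) + r * d = s)
    (x : Fin n → ℕ)
    (hx : ∀ I : Finset (Fin n), 1 ≤ I.card → I.card ≤ n - r + 1 →
      ∑ i ∈ I, x i ≤ (∑ i ∈ I, a i) + d) :
    ∃ i' ≤ d / (n - r + 1),
      (∑ j, (x j - (a j + i'))) ≤ d - (n - r + 1) * i' :=
  stmt2_general n r d a x hx
end

section
/- The sets K(r,n,a,d) and L(r,n,a,d) are equal, and both are r-wise s-union families. -/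
/-!
Write `t = x - a` (truncated subtraction). Membership of `x` in `K` amounts to a level `i` with
`u * i + ∑ⱼ (tⱼ - i) ≤ d`, and membership in `L` to every `u` coordinates of `t` summing to at
most `d`. The first gives the second since `tⱼ ≤ i + (tⱼ - i)`; conversely, the least level `i`
exceeded by at most `u` coordinates of `t` works, as witnessed by `u` coordinates containing all
those above `i` and none below it.

For the union bound, split the coordinates according to which of the `r` vectors attains the
maximum there. A class `C` contributes at most `∑_C a + ⌈|C| / u⌉ d`, and `∑ ⌈|C| / u⌉ ≤ r`
because the class sizes add up to `n < u + r`.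
-/

open Finset

section Threshold

variable {ι : Type*} [Fintype ι] {t : ι → ℕ} {u d : ℕ}

theorem exists_mul_add_sum_tsub_le (h : ∀ I : Finset ι, #I ≤ u → ∑ j ∈ I, t j ≤ d) :
    ∃ i, u * i + ∑ j, (t j - i) ≤ d := by
  have hnone : ({j | ∑ k, t k < t j} : Finset ι) = ∅ :=
    filter_eq_empty_iff.2 fun j _ =>
      not_lt.2 (single_le_sum (fun k _ => Nat.zero_le (t k)) (mem_univ j))
  have hex : ∃ i, #{j | i < t j} ≤ u := ⟨∑ k, t k, by simp [hnone]⟩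
  obtain ⟨i, hiu, hmin⟩ : ∃ i, #{j | i < t j} ≤ u ∧ ∀ k < i, u < #{j | k < t j} :=
    ⟨Nat.find hex, Nat.find_spec hex, fun k hk => not_le.1 (Nat.find_min hex hk)⟩
  refine ⟨i, ?_⟩
  set B : Finset ι := {j | i < t j}
  obtain ⟨I, hBI, hIu, hIt, hui⟩ : ∃ I : Finset ι, B ⊆ I ∧ #I ≤ u ∧
      (∀ j ∈ I, i ≤ t j) ∧ u * i ≤ #I * i := by
    rcases Nat.eq_zero_or_pos i with hi | hi
    · exact ⟨B, subset_rfl, hiu, fun _ _ => by omega, by simp [hi]⟩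
    · have hprev := hmin (i - 1) (by omega)
      have hsub : B ⊆ ({j | i - 1 < t j} : Finset ι) := by
        intro j hj
        simp only [B, mem_filter, mem_univ, true_and] at hj ⊢
        omega
      obtain ⟨I, hBI, hIA, hI⟩ := exists_subsuperset_card_eq hsub hiu hprev.le
      refine ⟨I, hBI, hI.le, fun j hj => ?_, by rw [hI]⟩
      have := (mem_filter.1 (hIA hj)).2
      omega
  have hout : ∑ j ∈ I, (t j - i) = ∑ j, (t j - i) :=
    sum_subset (subset_univ I) fun j _ hj => by
      have : ¬ i < t j := fun hij => hj (hBI (mem_filter.2 ⟨mem_univ j, hij⟩))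
      omega
  calc u * i + ∑ j, (t j - i) ≤ #I * i + ∑ j ∈ I, (t j - i) := by rw [hout]; omega
    _ = ∑ j ∈ I, t j := by
      rw [← smul_eq_mul, ← sum_const, ← sum_add_distrib]
      exact sum_congr rfl fun j hj => by have := hIt j hj; omega
    _ ≤ d := h I hIu

theorem sum_le_mul_of_mul_add_sum_tsub_le {i m : ℕ} {C : Finset ι}
    (h : u * i + ∑ j, (t j - i) ≤ d) (hC : #C ≤ u * m) : ∑ j ∈ C, t j ≤ m * d := by
  rcases m with _ | m
  · simp_all
  have hm : m * (u * i) ≤ m * d := Nat.mul_le_mul_left m (by omega)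
  calc ∑ j ∈ C, t j ≤ ∑ j ∈ C, (i + (t j - i)) := sum_le_sum fun j _ => le_add_tsub
    _ = #C * i + ∑ j ∈ C, (t j - i) := by rw [sum_add_distrib, sum_const, smul_eq_mul]
    _ ≤ u * (m + 1) * i + ∑ j, (t j - i) := by gcongr; exact subset_univ C
    _ = m * (u * i) + (u * i + ∑ j, (t j - i)) := by ring
    _ ≤ (m + 1) * d := by linarith

end Threshold

theorem sum_ceilDiv_le_card {κ : Type*} {s : Finset κ} {c : κ → ℕ} {u : ℕ} (hu : 0 < u)
    (h : ∑ k ∈ s, c k < u + #s) : ∑ k ∈ s, c k ⌈/⌉ u ≤ #s := by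
  have hk : ∀ k, u * (c k ⌈/⌉ u) + 1 ≤ c k + u := fun k => by
    have := Nat.div_mul_le_self (c k + u - 1) u
    rw [Nat.ceilDiv_eq_add_pred_div, mul_comm]
    omega
  have : u * ∑ k ∈ s, c k ⌈/⌉ u + #s < u * (#s + 1) + #s :=
    calc u * ∑ k ∈ s, c k ⌈/⌉ u + #s = ∑ k ∈ s, (u * (c k ⌈/⌉ u) + 1) := by
          rw [mul_sum, sum_add_distrib, card_eq_sum_ones]
      _ ≤ ∑ k ∈ s, (c k + u) := sum_le_sum fun k _ => hk k
      _ < u * (#s + 1) + #s := by rw [sum_add_distrib, sum_const, smul_eq_mul]; nlinarith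
  exact Nat.lt_succ_iff.1 (Nat.lt_of_mul_lt_mul_left (by omega : _ < u * (#s + 1)))

theorem sum_sup_le_of_forall_sum_le {ι κ : Type*} [Fintype ι] [Fintype κ] [Nonempty κ]
    {f : κ → ι → ℕ} {a : ι → ℕ} {u d : ℕ} (hu : 0 < u)
    (hcard : Fintype.card ι < u + Fintype.card κ)
    (hf : ∀ k (C : Finset ι), ∑ j ∈ C, f k j ≤ ∑ j ∈ C, a j + (#C ⌈/⌉ u) * d) :
    ∑ j, univ.sup (fun k => f k j) ≤ ∑ j, a j + Fintype.card κ * d := by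
  classical
  choose g hg using fun j => exists_mem_eq_sup univ univ_nonempty (fun k => f k j)
  have hfibres : ∑ k, #{j | g j = k} < u + #(univ : Finset κ) := by
    rw [← card_eq_sum_card_fiberwise fun j _ => mem_univ (g j), card_univ, card_univ]
    exact hcard
  calc ∑ j, univ.sup (fun k => f k j) = ∑ k, ∑ j with g j = k, f k j := by
        rw [sum_congr rfl fun j _ => (hg j).2, ← sum_fiberwise univ g fun j => f (g j) j]
        exact sum_congr rfl fun k _ => sum_congr rfl fun j hj => by rw [(mem_filter.1 hj).2]
    _ ≤ ∑ k, (∑ j with g j = k, a j + (#{j | g j = k} ⌈/⌉ u) * d) :=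
        sum_le_sum fun k _ => hf k _
    _ = ∑ j, a j + (∑ k, #{j | g j = k} ⌈/⌉ u) * d := by
        rw [sum_add_distrib, sum_fiberwise univ g a, sum_mul]
    _ ≤ ∑ j, a j + Fintype.card κ * d := by
        gcongr
        simpa using sum_ceilDiv_le_card hu hfibres

section Families

variable {ι : Type*} {a x : ι → ℕ} {u d : ℕ}

/-- The paper's `L(r,n,a,d)` is `familyL a (n - r + 1) d`, and `K(r,n,a,d)` is
`familyK a (n - r + 1) d`. -/
def familyL (a : ι → ℕ) (u d : ℕ) : Set (ι → ℕ) :=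
  {x | ∀ I : Finset ι, 1 ≤ #I → #I ≤ u → ∑ j ∈ I, x j ≤ ∑ j ∈ I, a j + d}

theorem sum_tsub_le_of_mem_familyL (hx : x ∈ familyL a u d) {I : Finset ι} (hI : #I ≤ u) :
    ∑ j ∈ I, (x j - a j) ≤ d := by
  set J := {j ∈ I | a j ≤ x j}
  have hJ : ∑ j ∈ J, (x j - a j) = ∑ j ∈ I, (x j - a j) :=
    sum_filter_of_ne fun j _ h => by omega
  rcases J.eq_empty_or_nonempty with hempty | hne
  · simp [← hJ, hempty]
  have hsum : ∑ j ∈ J, (x j - a j) + ∑ j ∈ J, a j = ∑ j ∈ J, x j := by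
    rw [← sum_add_distrib]
    exact sum_congr rfl fun j hj => tsub_add_cancel_of_le (mem_filter.1 hj).2
  have := hx J hne.card_pos ((card_filter_le _ _).trans hI)
  omega

variable [Fintype ι]

def familyK (a : ι → ℕ) (u d : ℕ) : Set (ι → ℕ) :=
  {x | ∃ i ≤ d / u, ∃ ε : ι → ℕ, ∑ j, ε j = d - u * i ∧ x ≤ fun j => a j + i + ε j}

theorem exists_mul_add_sum_tsub_le_of_mem_familyK (hx : x ∈ familyK a u d) :
    ∃ i, u * i + ∑ j, (x j - a j - i) ≤ d := by
  obtain ⟨i, hid, ε, hε, hxε⟩ := hx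
  have hui : u * i ≤ d := (Nat.mul_le_mul_left u hid).trans (Nat.mul_div_le d u)
  have : ∑ j, (x j - a j - i) ≤ ∑ j, ε j :=
    sum_le_sum fun j _ => by have := hxε j; simp only at this; omega
  exact ⟨i, by omega⟩

theorem mem_familyK_of_mul_add_sum_tsub_le [Nonempty ι] (hu : 0 < u) {i : ℕ}
    (h : u * i + ∑ j, (x j - a j - i) ≤ d) : x ∈ familyK a u d := by
  classical
  let j₀ : ι := Classical.arbitrary ι
  refine ⟨i, (Nat.le_div_iff_mul_le hu).2 (by rw [mul_comm]; omega),
    fun j => (x j - a j - i) + (Pi.single j₀ (d - u * i - ∑ k, (x k - a k - i)) : ι → ℕ) j, ?_,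
    fun j => by simp only; omega⟩
  rw [sum_add_distrib, Fintype.sum_pi_single']
  omega

theorem sum_le_sum_add_mul_of_mem_familyK (hx : x ∈ familyK a u d) {C : Finset ι} {m : ℕ}
    (hC : #C ≤ u * m) : ∑ j ∈ C, x j ≤ ∑ j ∈ C, a j + m * d := by
  obtain ⟨i, hi⟩ := exists_mul_add_sum_tsub_le_of_mem_familyK hx
  calc ∑ j ∈ C, x j ≤ ∑ j ∈ C, (a j + (x j - a j)) := sum_le_sum fun j _ => le_add_tsub
    _ = ∑ j ∈ C, a j + ∑ j ∈ C, (x j - a j) := sum_add_distrib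
    _ ≤ ∑ j ∈ C, a j + m * d := by
      gcongr
      exact sum_le_mul_of_mul_add_sum_tsub_le (t := fun j => x j - a j) hi hC

theorem familyK_eq_familyL [Nonempty ι] (hu : 0 < u) : familyK a u d = familyL a u d := by
  ext x
  constructor
  · intro hx I _ hI
    simpa using sum_le_sum_add_mul_of_mem_familyK hx (m := 1) (by simpa using hI)
  · intro hx
    obtain ⟨i, hi⟩ := exists_mul_add_sum_tsub_le fun I hI => sum_tsub_le_of_mem_familyL hx hI
    exact mem_familyK_of_mul_add_sum_tsub_le hu hi

theorem sum_sup_le_of_mem_familyK {κ : Type*} [Fintype κ] [Nonempty κ] {f : κ → ι → ℕ}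
    (hu : 0 < u) (hcard : Fintype.card ι < u + Fintype.card κ) (hf : ∀ k, f k ∈ familyK a u d) :
    ∑ j, univ.sup (fun k => f k j) ≤ ∑ j, a j + Fintype.card κ * d :=
  sum_sup_le_of_forall_sum_le hu hcard fun k _ =>
    sum_le_sum_add_mul_of_mem_familyK (hf k) (le_smul_ceilDiv hu)

end Families

/-- `K(r,n,a,d) = L(r,n,a,d)`, and both are `r`-wise `s`-union families. -/
theorem stmt3 (n r s d : ℕ) (hr : 2 ≤ r) (hn : r ≤ n)
    (a : Fin n → ℕ) (ha : (∑ i, a i) + r * d = s)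
    (K L : Set (Fin n → ℕ))
    (hK : K = {x | ∃ i ≤ d / (n - r + 1), ∃ ε : Fin n → ℕ,
      (∑ j, ε j) = d - (n - r + 1) * i ∧ x ≤ fun j => a j + i + ε j})
    (hL : L = {x | ∀ I : Finset (Fin n), 1 ≤ I.card → I.card ≤ n - r + 1 →
      ∑ i ∈ I, x i ≤ (∑ i ∈ I, a i) + d}) :
    K = L ∧
    (∀ f : Fin r → (Fin n → ℕ), (∀ t, f t ∈ K) →
      (∑ j, Finset.univ.sup fun t => f t j) ≤ s) ∧
    (∀ f : Fin r → (Fin n → ℕ), (∀ t, f t ∈ L) →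
      (∑ j, Finset.univ.sup fun t => f t j) ≤ s) := by
  have hu : 0 < n - r + 1 := Nat.succ_pos _
  have : Nonempty (Fin n) := ⟨⟨0, by omega⟩⟩
  have : Nonempty (Fin r) := ⟨⟨0, by omega⟩⟩
  change K = familyK a (n - r + 1) d at hK
  change L = familyL a (n - r + 1) d at hL
  have hKL : K = L := by rw [hK, hL, familyK_eq_familyL hu]
  have hunion : ∀ f : Fin r → Fin n → ℕ, (∀ t, f t ∈ K) →
      (∑ j, univ.sup fun t => f t j) ≤ s := fun f hf => by
    have := sum_sup_le_of_mem_familyK hu (by simp only [Fintype.card_fin]; omega) (hK ▸ hf)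
    rwa [Fintype.card_fin, ha] at this
  exact ⟨hKL, hunion, hKL ▸ hunion⟩
end

section
/- The cardinality of the base layer D(U(a,d)) ⊆ ℕⁿ equals ∑_{j=0}^{n} C(d+j, j)·σ_{n−j}(a), where σ_k(a) is the k-th elementary symmetric polynomial in a₁,…,a_n. -/
/-!
Sorting the points by their first coordinate `x`, the rest of the point has budget `d` when
`x < a₀` and budget `d - e` when `x = a₀ + e`, so the count `N(a, d)` satisfies
`N(a, d) = a₀ N(a', d) + ∑_{e ≤ d} N(a', e)`. By the hockey-stick identity the additive map
`X ^ m ↦ (d + m).choose m` applied to `(X + a₀) p` obeys the same recursion, hence `N(a, d)` is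
this map applied to `∏ i, (X + aᵢ)`, whose coefficients are elementary symmetric functions of `a`
by Vieta's formula.
-/

open Finset Polynomial

section BaseLayer

variable {ι : Type*} [Fintype ι] [DecidableEq ι]

/-- The paper's `D(U(a,d))`; `c i - a i` is truncated, i.e. it is the excess `(c i - a i)₊`. -/
def baseLayer (a : ι → ℕ) (d : ℕ) : Finset (ι → ℕ) :=
  {c ∈ Fintype.piFinset fun i => range (a i + d + 1) | ∑ i, (c i - a i) ≤ d}

theorem mem_baseLayer {a c : ι → ℕ} {d : ℕ} : c ∈ baseLayer a d ↔ ∑ i, (c i - a i) ≤ d := by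
  refine mem_filter.trans ⟨And.right, fun h => ⟨Fintype.mem_piFinset.2 fun i => ?_, h⟩⟩
  have : c i - a i ≤ ∑ j, (c j - a j) :=
    single_le_sum (f := fun j => c j - a j) (fun j _ => Nat.zero_le _) (mem_univ i)
  rw [mem_range]
  omega

theorem coe_baseLayer [Nonempty ι] (a : ι → ℕ) (d : ℕ) :
    (baseLayer a d : Set (ι → ℕ)) =
      {c | ∃ ε : ι → ℕ, ∑ j, ε j = d ∧ c ≤ fun j => a j + ε j} := by
  ext c
  rw [mem_coe, mem_baseLayer, Set.mem_ofPred_eq]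
  constructor
  · intro h
    -- pad the excess of `c` at one coordinate so that its total is exactly `d`
    obtain ⟨i₀⟩ := ‹Nonempty ι›
    refine ⟨fun j => (c j - a j) + Pi.single (M := fun _ => ℕ) i₀ (d - ∑ i, (c i - a i)) j,
      ?_, fun j => ?_⟩
    · rw [sum_add_distrib, sum_pi_single', if_pos (mem_univ _)]
      omega
    · have : c j ≤ a j + (c j - a j) := by omega
      exact this.trans (by simp)
  · rintro ⟨ε, rfl, hcε⟩
    exact sum_le_sum fun j _ => Nat.sub_le_iff_le_add'.2 (hcε j)

end BaseLayer

/-- `(d + m).choose m` counts the points of `ℕ^m` with coordinate sum at most `d`. -/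
def simplexCount (d : ℕ) (p : ℕ[X]) : ℕ :=
  p.sum fun m c => c * (d + m).choose m

theorem simplexCount_add (d : ℕ) (p q : ℕ[X]) :
    simplexCount d (p + q) = simplexCount d p + simplexCount d q :=
  sum_add_index p q _ (fun _ => zero_mul _) fun _ _ _ => add_mul _ _ _

theorem simplexCount_monomial (d m c : ℕ) :
    simplexCount d (monomial m c) = c * (d + m).choose m :=
  sum_monomial_index c _ (zero_mul _)

theorem simplexCount_X_add_C_mul (d a : ℕ) (p : ℕ[X]) :
    simplexCount d ((X + C a) * p) =
      a * simplexCount d p + ∑ e ∈ range (d + 1), simplexCount e p := by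
  induction p using Polynomial.induction_on' with
  | add p q hp hq =>
    simp only [mul_add, simplexCount_add, hp, hq, sum_add_distrib]
    ring
  | monomial m c =>
    rw [add_mul, X_mul_monomial, C_mul_monomial, simplexCount_add]
    simp only [simplexCount_monomial, ← mul_sum, Nat.sum_range_add_choose]
    ring_nf

theorem simplexCount_prod_X_add_C {σ : Type*} (s : Finset σ) (a : σ → ℕ) (d : ℕ) :
    simplexCount d (∏ i ∈ s, (X + C (a i))) =
      ∑ j ∈ range (#s + 1), (d + j).choose j * ∑ t ∈ s.powersetCard (#s - j), ∏ i ∈ t, a i := by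
  have hdeg : (∏ i ∈ s, (X + C (a i))).natDegree < #s + 1 := by
    refine Nat.lt_succ_of_le ((natDegree_prod_le _ _).trans_eq ?_)
    simp only [natDegree_X_add_C, sum_const, smul_eq_mul, mul_one]
  rw [simplexCount, sum_over_range' _ (fun m => zero_mul ((d + m).choose m)) _ hdeg]
  refine sum_congr rfl fun j hj => ?_
  rw [prod_X_add_C_coeff s a (Nat.lt_succ_iff.1 (mem_range.1 hj)), mul_comm]

section FirstCoordinate

variable {n : ℕ}

theorem card_filter_baseLayer_apply_zero (a : Fin (n + 1) → ℕ) (d : ℕ) {x : ℕ}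
    (hx : x - a 0 ≤ d) :
    #{c ∈ baseLayer a d | c 0 = x} = #(baseLayer (Fin.tail a) (d - (x - a 0))) := by
  refine card_nbij' Fin.tail (fun t : Fin n → ℕ => (Fin.cons x t : Fin (n + 1) → ℕ))
    ?_ ?_ ?_ ?_
  · rintro c hc
    simp only [coe_filter, Set.mem_ofPred_eq, mem_baseLayer, Fin.sum_univ_succ] at hc
    rw [mem_coe, mem_baseLayer]
    exact le_tsub_of_add_le_left (hc.2 ▸ hc.1)
  · intro t ht
    rw [mem_coe, mem_baseLayer] at ht
    refine mem_filter.2 ⟨mem_baseLayer.2 ?_, Fin.cons_zero _ _⟩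
    rw [Fin.sum_univ_succ]
    simpa [Fin.tail] using add_le_of_le_tsub_left_of_le hx ht
  · rintro c hc
    simp only [coe_filter, Set.mem_ofPred_eq] at hc
    simp [← hc.2]
  · intro t _
    simp

theorem card_baseLayer_succ (a : Fin (n + 1) → ℕ) (d : ℕ) :
    #(baseLayer a d) = a 0 * #(baseLayer (Fin.tail a) d) +
      ∑ e ∈ range (d + 1), #(baseLayer (Fin.tail a) e) := by
  have hmaps : Set.MapsTo (fun c : Fin (n + 1) → ℕ => c 0) (baseLayer a d)
      (range (a 0 + (d + 1))) := fun c hc => by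
    simpa [add_assoc] using Fintype.mem_piFinset.1 (mem_filter.1 hc).1 0
  rw [card_eq_sum_card_fiberwise hmaps, sum_range_add]
  congr 1
  · rw [sum_congr rfl (g := fun _ => #(baseLayer (Fin.tail a) d)), sum_const, card_range,
      smul_eq_mul]
    intro x hx
    have hx : x - a 0 = 0 := Nat.sub_eq_zero_of_le (mem_range.1 hx).le
    rw [card_filter_baseLayer_apply_zero a d (by omega), hx, Nat.sub_zero]
  · rw [← sum_range_reflect]
    refine sum_congr rfl fun e he => ?_
    have he : e ≤ d := Nat.lt_succ_iff.1 (mem_range.1 he)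
    rw [card_filter_baseLayer_apply_zero a d (by omega)]
    congr 2
    omega

theorem card_baseLayer_eq_simplexCount (a : Fin n → ℕ) (d : ℕ) :
    #(baseLayer a d) = simplexCount d (∏ i, (X + C (a i))) := by
  induction n generalizing d with
  | zero =>
    rw [Fin.prod_univ_zero, ← C_1, ← monomial_zero_left, simplexCount_monomial]
    simp [baseLayer]
  | succ n ih =>
    simp only [card_baseLayer_succ, ih, Fin.tail, Fin.prod_univ_succ, simplexCount_X_add_C_mul]

end FirstCoordinate

/-- `|D(U(a,d))| = ∑_{j=0}^{n} C(d+j, j) · σ_{n-j}(a)`, where `σ_k` is the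
`k`-th elementary symmetric polynomial of `a₁,…,a_n`. -/
theorem stmt6 (n d : ℕ) (hn : 1 ≤ n) (a : Fin n → ℕ) :
    {c : Fin n → ℕ | ∃ ε : Fin n → ℕ, (∑ j, ε j) = d ∧
      c ≤ fun j => a j + ε j}.ncard =
    ∑ j ∈ Finset.range (n + 1), (d + j).choose j *
      (∑ K ∈ (Finset.univ : Finset (Fin n)).powersetCard (n - j),
        ∏ i ∈ K, a i) := by
  have : Nonempty (Fin n) := Fin.pos_iff_nonempty.1 hn
  rw [← coe_baseLayer, Set.ncard_coe_finset, card_baseLayer_eq_simplexCount,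
    simplexCount_prod_X_add_C, card_univ, Fintype.card_fin]
end

section
/- Let A ⊆ ℕⁿ be r-wise s-union, suppose d := (|m| − s)/(n−r) is a well-defined non-negative integer where m_i := max{x_i : x ∈ A}, set a_i := m_i − d and assume a_i ≥ 0 for all i, and assume all vectors P_i := a + d·e_i belong to A. Then A ⊆ L(r,n,a,d), i.e., every x ∈ A satisfies ∑_{i∈I} x_i ≤ ∑_{i∈I} a_i + d for all I ⊆ [n] with 1 ≤ |I| ≤ n−r+1. -/
/-!
Fix `I` with `|Iᶜ| ≥ r - 1` and pick `r - 1` coordinates `C ⊆ Iᶜ`. The join of `x` with the `r - 1`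
vectors `P_c = a + d e_c`, `c ∈ C`, dominates `x` on `I`, `a + d` on `C` and `a` elsewhere, so its
weight is at least `∑_{i ∈ I} x_i + ∑_{i ∉ I} a_i + (r - 1) d`. Being an `r`-wise join, its weight is
at most `s = |a| + r d`, and comparing the two bounds gives `∑_{i ∈ I} x_i ≤ ∑_{i ∈ I} a_i + d`.
-/

open Finset

namespace RWiseUnion

variable {ι : Type*} [DecidableEq ι]

def bump (a : ι → ℕ) (d : ℕ) (i : ι) : ι → ℕ := fun j => a j + if j = i then d else 0

lemma le_bump (a : ι → ℕ) (d : ℕ) (i : ι) : a ≤ bump a d i := fun _ => Nat.le_add_right _ _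

@[simp]
lemma bump_self (a : ι → ℕ) (d : ℕ) (i : ι) : bump a d i i = a i + d := by simp [bump]

theorem sum_add_card_mul_le_sum [Fintype ι] {x a g : ι → ℕ} {d : ℕ} {I C : Finset ι}
    (hCI : Disjoint C I) (hC : C.Nonempty) (hx : x ≤ g) (hbump : ∀ c ∈ C, bump a d c ≤ g) :
    ∑ i ∈ I, x i + ∑ i ∈ Iᶜ, a i + #C * d ≤ ∑ i, g i := by
  obtain ⟨c₀, hc₀⟩ := hC
  have ha : a ≤ g := (le_bump a d c₀).trans (hbump c₀ hc₀)
  have hCsub : C ⊆ Iᶜ := fun c hc => mem_compl.2 (disjoint_left.1 hCI hc)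
  calc ∑ i ∈ I, x i + ∑ i ∈ Iᶜ, a i + #C * d
      = ∑ i ∈ I, x i + (∑ i ∈ Iᶜ \ C, a i + ∑ i ∈ C, (a i + d)) := by
        rw [sum_add_distrib, sum_const, smul_eq_mul, ← sum_sdiff hCsub (f := a)]
        ring
    _ ≤ ∑ i ∈ I, g i + (∑ i ∈ Iᶜ \ C, g i + ∑ i ∈ C, g i) := by
        gcongr with i _ i _ i hi
        · exact hx i
        · exact ha i
        · simpa using hbump i hi i
    _ = ∑ i, g i := by rw [sum_sdiff hCsub, sum_add_sum_compl]

theorem sum_le_sum_add_of_bump_mem [Fintype ι] {k s d : ℕ} (hk : 1 ≤ k) {A : Set (ι → ℕ)}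
    (hunion : ∀ f : Fin (k + 1) → ι → ℕ, (∀ t, f t ∈ A) →
      (∑ j, univ.sup fun t => f t j) ≤ s)
    {a : ι → ℕ} (hs : s = ∑ i, a i + (k + 1) * d) (hbump : ∀ i, bump a d i ∈ A)
    {x : ι → ℕ} (hx : x ∈ A) {I : Finset ι} (hI : k ≤ #Iᶜ) :
    ∑ i ∈ I, x i ≤ ∑ i ∈ I, a i + d := by
  obtain ⟨C, hCI, hCcard⟩ := exists_subset_card_eq hI
  let e : Fin k ≃ C := (Fintype.equivFinOfCardEq (by rw [Fintype.card_coe, hCcard])).symm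
  let f : Fin (k + 1) → ι → ℕ := Fin.cons x fun t => bump a d (e t)
  have hjoin : ∑ i, (univ.sup f) i ≤ s := by
    simpa only [Finset.sup_apply] using hunion f (Fin.cases hx fun t => hbump _)
  have hlower := sum_add_card_mul_le_sum (x := x) (I := I) (C := C) (d := d)
    (disjoint_left.2 fun c hc => mem_compl.1 (hCI hc))
    (card_pos.1 (by omega)) (le_sup (f := f) (mem_univ 0))
    fun c hc => by simpa [f] using le_sup (f := f) (mem_univ (e.symm ⟨c, hc⟩).succ)
  rw [← sum_add_sum_compl I a, add_mul, one_mul] at hs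
  rw [hCcard] at hlower
  omega

end RWiseUnion

/-- `d = (|m| - s)/(n - r)` is encoded by `∑ m = s + (n - r) * d`, and `a = m - d ≥ 0` by
`a i + d = m i`. -/
theorem stmt7_general (n r s d : ℕ) (hr : 2 ≤ r) (hrn : r < n)
    (A : Set (Fin n → ℕ))
    (hunion : ∀ f : Fin r → (Fin n → ℕ), (∀ t, f t ∈ A) →
      (∑ j, Finset.univ.sup fun t => f t j) ≤ s)
    (m a : Fin n → ℕ)
    (hd : (∑ i, m i) = s + (n - r) * d)
    (ha : ∀ i, a i + d = m i)
    (hP : ∀ i : Fin n, (fun j => a j + if j = i then d else 0) ∈ A) :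
    ∀ x ∈ A, ∀ I : Finset (Fin n), 1 ≤ I.card → I.card ≤ n - r + 1 →
      ∑ i ∈ I, x i ≤ (∑ i ∈ I, a i) + d := by
  intro x hx I _ hI
  obtain ⟨k, rfl⟩ : ∃ k, r = k + 1 := ⟨r - 1, by omega⟩
  have hm : ∑ i, m i = ∑ i, a i + n * d := by
    simp [← ha, sum_add_distrib]
  have hnd : n * d = (n - (k + 1)) * d + (k + 1) * d := by
    rw [← add_mul, Nat.sub_add_cancel hrn.le]
  refine RWiseUnion.sum_le_sum_add_of_bump_mem (by omega) hunion (by omega) hP hx ?_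
  rw [card_compl, Fintype.card_fin]
  omega

/-- If `A ⊆ ℕⁿ` is `r`-wise `s`-union, `m_i = max{x_i : x ∈ A}`,
`d = (|m| - s)/(n-r) ≥ 0` (encoded by `∑ m = s + (n-r)·d`), `a_i = m_i - d ≥ 0`
(encoded by `a_i + d = m_i`), and all `P_i = a + d·e_i` belong to `A`, then
`A ⊆ L(r,n,a,d)`. -/
theorem stmt7 (n r s d : ℕ) (hr : 2 ≤ r) (hrn : r < n)
    (A : Set (Fin n → ℕ)) (hAfin : A.Finite) (hAne : A.Nonempty)
    (hunion : ∀ f : Fin r → (Fin n → ℕ), (∀ t, f t ∈ A) →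
      (∑ j, Finset.univ.sup fun t => f t j) ≤ s)
    (m a : Fin n → ℕ)
    (hm : ∀ i, IsGreatest {v | ∃ x ∈ A, v = x i} (m i))
    (hd : (∑ i, m i) = s + (n - r) * d)
    (ha : ∀ i, a i + d = m i)
    (hP : ∀ i : Fin n, (fun j => a j + if j = i then d else 0) ∈ A) :
    ∀ x ∈ A, ∀ I : Finset (Fin n), 1 ≤ I.card → I.card ≤ n - r + 1 →
      ∑ i ∈ I, x i ≤ (∑ i ∈ I, a i) + d :=
  stmt7_general n r s d hr hrn A hunion m a hd ha hP
end

section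
/- Under the assumptions of Theorem 2 (A ⊆ ℕⁿ is r-wise s-union, P₁,…,P_n ∈ A with P_i = a + d·e_i as defined), for every I ⊆ [n] with 1 ≤ |I| ≤ n−r+1 one has max{∑_{i∈I} x_i : x ∈ A} = ∑_{i∈I} a_i + d. -/
/-!
Fix `x ∈ A` and `I`. Since `|I| ≤ n - r + 1`, there are `r - 1` coordinates `J` outside `I`;
the union of `x` with the `r - 1` points `a + d eⱼ`, `j ∈ J`, dominates `x` on `I`, `a + d` on `J`
and `a` elsewhere. Its size is at most `s = |a| + r d`, which leaves `∑_{i ∈ I} xᵢ ≤ ∑_{i ∈ I} aᵢ + d`.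
The points `a + d eᵢ`, `i ∈ I`, attain the bound.
-/

open Finset

variable {ι : Type*} [Fintype ι]

/-- `|x₁ ∨ ⋯ ∨ x_r| ≤ s`, with `∨` the coordinatewise maximum; the `xₜ` need not be distinct. -/
def IsRWiseSUnion (r s : ℕ) (A : Set (ι → ℕ)) : Prop :=
  ∀ f : Fin r → (ι → ℕ), (∀ t, f t ∈ A) → (∑ j, univ.sup fun t => f t j) ≤ s

-- Pad `T` to `r` members by repetition.
theorem IsRWiseSUnion.sum_sup_le {r s : ℕ} {A : Set (ι → ℕ)} (hA : IsRWiseSUnion r s A)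
    {T : Finset (ι → ℕ)} (hTA : ↑T ⊆ A) (hT : T.Nonempty) (hTr : #T ≤ r) :
    ∑ j, T.sup (fun y => y j) ≤ s := by
  have : Nonempty T := hT.to_subtype
  obtain ⟨e⟩ : Nonempty (T ↪ Fin r) :=
    Function.Embedding.nonempty_of_card_le (by simpa using hTr)
  set g : Fin r → T := Function.invFun e
  have hg : Function.Surjective g := Function.invFun_surjective e.injective
  have hsup : ∀ j, (univ.sup fun t => (g t : ι → ℕ) j) = T.sup (fun y => y j) := fun j =>
    le_antisymm (Finset.sup_le fun t _ => le_sup (f := fun y : ι → ℕ => y j) (g t).2)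
      (Finset.sup_le fun y hy => by
        obtain ⟨t, ht⟩ := hg ⟨y, hy⟩
        exact le_sup_of_le (mem_univ t) (by rw [ht]))
  simpa only [hsup] using hA (fun t => g t) fun t => hTA (g t).2

theorem IsRWiseSUnion.sum_add_sum_compl_add_card_mul_le [DecidableEq ι] {r s d : ℕ}
    {A : Set (ι → ℕ)} (hA : IsRWiseSUnion r s A) {a x : ι → ℕ}
    (hP : ∀ i, a + Pi.single i d ∈ A) (hx : x ∈ A) {I J : Finset ι} (hJI : J ⊆ Iᶜ)
    (hJ : J.Nonempty) (hJr : #J < r) :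
    ∑ i ∈ I, x i + (∑ i ∈ Iᶜ, a i + #J * d) ≤ s := by
  set T := insert x (J.image fun i => a + Pi.single i d)
  have hTA : ↑T ⊆ A := by
    simp only [T, coe_insert, coe_image, Set.insert_subset_iff, Set.image_subset_iff]
    exact ⟨hx, fun i _ => hP i⟩
  have hTr : #T ≤ r := (card_insert_le _ _).trans (Nat.succ_le_of_lt ((card_image_le).trans_lt hJr))
  have hx_le : ∀ j, x j ≤ T.sup (fun y => y j) := fun j =>
    le_sup (f := fun y : ι → ℕ => y j) (mem_insert_self x _)
  have hP_le : ∀ i ∈ J, ∀ j, a j + (Pi.single i d : ι → ℕ) j ≤ T.sup (fun y => y j) := fun i hi j =>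
    le_sup (f := fun y : ι → ℕ => y j) (mem_insert_of_mem (mem_image_of_mem (fun i => a + Pi.single i d) hi))
  have hbump_le : ∀ j, a j + (if j ∈ J then d else 0) ≤ T.sup (fun y => y j) := by
    intro j
    by_cases hj : j ∈ J
    · simpa [hj] using hP_le j hj j
    · obtain ⟨i, hi⟩ := hJ
      simpa [hj] using (Nat.le_add_right _ _).trans (hP_le i hi j)
  calc ∑ i ∈ I, x i + (∑ i ∈ Iᶜ, a i + #J * d)
      = ∑ i ∈ I, x i + ∑ j ∈ Iᶜ, (a j + if j ∈ J then d else 0) := by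
        rw [sum_add_distrib, sum_ite_mem, inter_eq_right.mpr hJI, sum_const, smul_eq_mul]
    _ ≤ ∑ j ∈ I, T.sup (fun y => y j) + ∑ j ∈ Iᶜ, T.sup (fun y => y j) :=
        add_le_add (sum_le_sum fun j _ => hx_le j) (sum_le_sum fun j _ => hbump_le j)
    _ = ∑ j, T.sup (fun y => y j) := sum_add_sum_compl _ _
    _ ≤ s := hA.sum_sup_le hTA (insert_nonempty _ _) hTr

theorem stmt8_general (n r s d : ℕ) (hr : 2 ≤ r) (hrn : r < n)
    (A : Set (Fin n → ℕ))
    (hunion : ∀ f : Fin r → (Fin n → ℕ), (∀ t, f t ∈ A) →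
      (∑ j, Finset.univ.sup fun t => f t j) ≤ s)
    (m a : Fin n → ℕ)
    (hd : (∑ i, m i) = s + (n - r) * d)
    (ha : ∀ i, a i + d = m i)
    (hP : ∀ i : Fin n, (fun j => a j + if j = i then d else 0) ∈ A) :
    ∀ I : Finset (Fin n), 1 ≤ I.card → I.card ≤ n - r + 1 →
      IsGreatest {v | ∃ x ∈ A, v = ∑ i ∈ I, x i} ((∑ i ∈ I, a i) + d) := by
  have hs : s = ∑ i, a i + r * d := by
    have hm : ∑ i, m i = ∑ i, a i + n * d := by simp [← ha, sum_add_distrib]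
    have hn : n * d = r * d + (n - r) * d := by rw [← add_mul, Nat.add_sub_cancel' hrn.le]
    omega
  have hP' : ∀ i, a + Pi.single i d ∈ A := fun i => by
    convert hP i using 1
    funext j
    simp [Pi.single_apply]
  intro I hI hIr
  refine ⟨?_, ?_⟩
  · obtain ⟨i, hi⟩ := card_pos.mp hI
    exact ⟨_, hP' i, by simp [sum_add_distrib, hi]⟩
  · rintro _ ⟨x, hx, rfl⟩
    obtain ⟨J, hJI, hJ⟩ := exists_subset_card_eq (s := Iᶜ) (n := r - 1)
      (by rw [card_compl, Fintype.card_fin]; omega)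
    have hbound := IsRWiseSUnion.sum_add_sum_compl_add_card_mul_le hunion hP' hx hJI
      (card_pos.mp (by omega)) (by omega)
    have hrd : r * d = #J * d + d := by
      rw [hJ, ← Nat.succ_mul, Nat.succ_eq_add_one, Nat.sub_add_cancel (by omega)]
    rw [hs, ← sum_add_sum_compl I a, hrd] at hbound
    omega

/-- Under the assumptions of Theorem 2, for every `I ⊆ [n]` with
`1 ≤ |I| ≤ n-r+1`, `max{∑_{i∈I} x_i : x ∈ A} = ∑_{i∈I} a_i + d`. -/
theorem stmt8 (n r s d : ℕ) (hr : 2 ≤ r) (hrn : r < n)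
    (A : Set (Fin n → ℕ)) (hAfin : A.Finite) (hAne : A.Nonempty)
    (hunion : ∀ f : Fin r → (Fin n → ℕ), (∀ t, f t ∈ A) →
      (∑ j, Finset.univ.sup fun t => f t j) ≤ s)
    (m a : Fin n → ℕ)
    (hm : ∀ i, IsGreatest {v | ∃ x ∈ A, v = x i} (m i))
    (hd : (∑ i, m i) = s + (n - r) * d)
    (ha : ∀ i, a i + d = m i)
    (hP : ∀ i : Fin n, (fun j => a j + if j = i then d else 0) ∈ A) :
    ∀ I : Finset (Fin n), 1 ≤ I.card → I.card ≤ n - r + 1 →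
      IsGreatest {v | ∃ x ∈ A, v = ∑ i ∈ I, x i} ((∑ i ∈ I, a i) + d) :=
  stmt8_general n r s d hr hrn A hunion m a hd ha hP
end

section
/- Let n = r+1 and let A ⊆ ℕ^{r+1} be an r-wise s-union family, with d := |m| − s ≥ 0 and a_i := m_i − d ≥ 0 where m_i := max{x_i : x ∈ A}. Then every x ∈ A satisfies x_i ≤ a_i + d for all i, and x_i + x_j ≤ a_i + a_j + d for all i ≠ j; hence A ⊆ L(r, r+1, a, d). -/
/-!
Fix `x ∈ A` and `i ≠ j`. The `r` coordinates other than `j` index `r` members of `A`: `x` for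
coordinate `i`, and for every other coordinate `k` a member of `A` attaining the maximum `m k`.
Their join dominates `x` at `i` and `j` and `m` everywhere else, so the `r`-wise `s`-union
property gives `x i + x j + ∑_{k ≠ i, j} m k ≤ s = ∑ m - d`, i.e. `x i + x j + d ≤ m i + m j`,
which is `x i + x j ≤ a i + a j + d`. The single-coordinate bound is just `x i ≤ m i`.
-/

open Finset Function

theorem Finset.sum_update_add {ι M : Type*} [Fintype ι] [DecidableEq ι] [AddCommMonoid M]
    (f : ι → M) (i : ι) (b : M) : ∑ k, update f i b k + f i = ∑ k, f k + b := by
  rw [sum_update_of_mem (mem_univ i), sum_eq_add_sum_sdiff_singleton_of_mem (mem_univ i) f]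
  abel

section UnionFamily

variable {r s : ℕ} {A : Set (Fin (r + 1) → ℕ)} {m x : Fin (r + 1) → ℕ}

theorem exists_family_update_le_sup (hmax : ∀ k, ∃ w ∈ A, w k = m k) (hx : x ∈ A)
    {i j : Fin (r + 1)} (hij : i ≠ j) :
    ∃ f : Fin r → Fin (r + 1) → ℕ, (∀ t, f t ∈ A) ∧
      ∀ k, update (update m i (x i)) j (x j) k ≤ univ.sup fun t => f t k := by
  classical
  choose w hwA hwm using hmax
  refine ⟨fun t => if j.succAbove t = i then x else w (j.succAbove t), ?_, ?_⟩
  · intro t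
    dsimp only
    split_ifs
    exacts [hx, hwA _]
  · obtain ⟨ti, hti⟩ := Fin.exists_succAbove_eq hij
    intro k
    rcases eq_or_ne k j with rfl | hkj
    · refine le_sup_of_le (mem_univ ti) ?_
      simp [hti]
    rcases eq_or_ne k i with rfl | hki
    · refine le_sup_of_le (mem_univ ti) ?_
      simp [hti, hkj]
    · obtain ⟨tk, htk⟩ := Fin.exists_succAbove_eq hkj
      refine le_sup_of_le (mem_univ tk) ?_
      simp [htk, hki, hkj, hwm]

theorem add_add_le_of_isGreatest (hunion : ∀ f : Fin r → (Fin (r + 1) → ℕ), (∀ t, f t ∈ A) →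
      (∑ j, Finset.univ.sup fun t => f t j) ≤ s)
    (hm : ∀ i, IsGreatest {v | ∃ x ∈ A, v = x i} (m i)) {d : ℕ} (hd : ∑ i, m i = s + d)
    (hx : x ∈ A) {i j : Fin (r + 1)} (hij : i ≠ j) : x i + x j + d ≤ m i + m j := by
  classical
  have hmax : ∀ k, ∃ w ∈ A, w k = m k := fun k =>
    let ⟨w, hw, hwk⟩ := (hm k).1; ⟨w, hw, hwk.symm⟩
  obtain ⟨f, hfA, hle⟩ := exists_family_update_le_sup hmax hx hij
  have hcover : ∑ k, update (update m i (x i)) j (x j) k ≤ s :=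
    (sum_le_sum fun k _ => hle k).trans (hunion f hfA)
  have hupdate_j := sum_update_add (update m i (x i)) j (x j)
  rw [update_of_ne hij.symm] at hupdate_j
  have hupdate_i := sum_update_add m i (x i)
  omega

end UnionFamily

theorem stmt10_general (r s d : ℕ)
    (A : Set (Fin (r + 1) → ℕ))
    (hunion : ∀ f : Fin r → (Fin (r + 1) → ℕ), (∀ t, f t ∈ A) →
      (∑ j, Finset.univ.sup fun t => f t j) ≤ s)
    (m a : Fin (r + 1) → ℕ)
    (hm : ∀ i, IsGreatest {v | ∃ x ∈ A, v = x i} (m i))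
    (hd : (∑ i, m i) = s + d)
    (ha : ∀ i, a i + d = m i) :
    ∀ x ∈ A, (∀ i, x i ≤ a i + d) ∧
      (∀ i j, i ≠ j → x i + x j ≤ a i + a j + d) ∧
      (∀ I : Finset (Fin (r + 1)), 1 ≤ I.card → I.card ≤ 2 →
        ∑ i ∈ I, x i ≤ (∑ i ∈ I, a i) + d) := by
  intro x hx
  have hsingle (i) : x i ≤ a i + d := ha i ▸ (hm i).2 ⟨x, hx, rfl⟩
  have hpair (i j) (hij : i ≠ j) : x i + x j ≤ a i + a j + d := by
    have hbound := add_add_le_of_isGreatest hunion hm hd hx hij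
    have hai := ha i
    have haj := ha j
    omega
  refine ⟨hsingle, hpair, fun I hI₁ hI₂ => ?_⟩
  obtain hI | hI : I.card = 1 ∨ I.card = 2 := by omega
  · obtain ⟨i, rfl⟩ := card_eq_one.mp hI
    simpa using hsingle i
  · obtain ⟨i, j, hij, rfl⟩ := card_eq_two.mp hI
    rw [sum_pair hij, sum_pair hij]
    exact hpair i j hij

/-- For `n = r+1`: if `A ⊆ ℕ^{r+1}` is `r`-wise `s`-union, `d = |m| - s ≥ 0`
(encoded by `∑ m = s + d`) and `a_i = m_i - d ≥ 0` (encoded by `a_i + d = m_i`),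
then every `x ∈ A` satisfies `x_i ≤ a_i + d` and `x_i + x_j ≤ a_i + a_j + d`
for `i ≠ j`; hence `A ⊆ L(r, r+1, a, d)`. -/
theorem stmt10 (r s d : ℕ) (hr : 2 ≤ r)
    (A : Set (Fin (r + 1) → ℕ)) (hAfin : A.Finite) (hAne : A.Nonempty)
    (hunion : ∀ f : Fin r → (Fin (r + 1) → ℕ), (∀ t, f t ∈ A) →
      (∑ j, Finset.univ.sup fun t => f t j) ≤ s)
    (m a : Fin (r + 1) → ℕ)
    (hm : ∀ i, IsGreatest {v | ∃ x ∈ A, v = x i} (m i))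
    (hd : (∑ i, m i) = s + d)
    (ha : ∀ i, a i + d = m i) :
    ∀ x ∈ A, (∀ i, x i ≤ a i + d) ∧
      (∀ i j, i ≠ j → x i + x j ≤ a i + a j + d) ∧
      (∀ I : Finset (Fin (r + 1)), 1 ≤ I.card → I.card ≤ 2 →
        ∑ i ∈ I, x i ≤ (∑ i ∈ I, a i) + d) :=
  stmt10_general r s d A hunion m a hm hd ha
end

section
/- Let r ≥ 2, s = dr + p with 0 ≤ p < r, and let A ⊆ ℕⁿ be a down set that is t-wise (dt+p)-union for some 2 ≤ t ≤ r but not (t−1)-wise (d(t−1)+p)-union. Then there exists b ∈ ℕⁿ with |b| ≤ (t−1)s such that A ⊆ {x + y : x, y ∈ ℕⁿ, |x| ≤ d−1, y ≤ b coordinatewise}; consequently |A| ≤ C(n+d−1, d−1)·2^{rs}. -/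
/-!
Let `f` be `t - 1` members of `A` whose join `b` has `|b| > d(t-1) + p`. Appending any `z ∈ A`
gives `t` members with join `b ⊔ z = b + (z - b)`, so `|b| + |z - b| ≤ dt + p` and hence
`|z - b| ≤ d - 1`; thus `z = (z - b) + (z ⊓ b)` with `z ⊓ b ≤ b`. Taking `z` in the family gives
`|b| ≤ dt + p ≤ s`. For the count, there are `C(n + d - 1, d - 1)` choices of `x` with
`|x| ≤ d - 1` and `∏ (bᵢ + 1) ≤ 2^|b|` choices of `y ≤ b`.
-/

open Finset
open scoped Pointwise

theorem Fin.sup_univ_cons {α : Type*} [SemilatticeSup α] [OrderBot α] {m : ℕ} (a : α)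
    (f : Fin m → α) : univ.sup (Fin.cons a f : Fin (m + 1) → α) = a ⊔ univ.sup f := by
  rw [Fin.univ_succ, sup_cons, sup_map]
  rfl

theorem Finset.card_piAntidiag_nat {ι : Type*} [DecidableEq ι] (s : Finset ι) (n : ℕ) :
    #(piAntidiag s n) = (#s).multichoose n := by
  simpa [finsuppAntidiag] using card_finsuppAntidiag_nat_eq_multichoose (s := s) n

variable {ι : Type*} [Fintype ι]

def IsTWiseUnion (A : Set (ι → ℕ)) (t u : ℕ) : Prop :=
  ∀ f : Fin t → ι → ℕ, (∀ j, f j ∈ A) → ∑ i, univ.sup (fun j => f j i) ≤ u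

theorem IsTWiseUnion.sum_sup_add_sum_tsub_le {A : Set (ι → ℕ)} {m u : ℕ}
    (hA : IsTWiseUnion A (m + 1) u) {f : Fin m → ι → ℕ} (hf : ∀ j, f j ∈ A) {z : ι → ℕ}
    (hz : z ∈ A) : ∑ i, univ.sup f i + ∑ i, (z - univ.sup f) i ≤ u := by
  have hcons : ∀ j, (Fin.cons z f : Fin (m + 1) → ι → ℕ) j ∈ A := Fin.cases hz hf
  calc ∑ i, univ.sup f i + ∑ i, (z - univ.sup f) i
      = ∑ i, univ.sup (fun j => (Fin.cons z f : Fin (m + 1) → ι → ℕ) j i) := by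
        rw [← sum_add_distrib]
        refine sum_congr rfl fun i _ => ?_
        rw [← Finset.sup_apply, Fin.sup_univ_cons, Pi.sup_apply, Pi.sub_apply, add_tsub_eq_max,
          max_comm]
    _ ≤ u := hA _ hcons

section Counting

variable [DecidableEq ι]

variable (ι) in
def latticeSimplex (k : ℕ) : Finset (ι → ℕ) :=
  (range (k + 1)).biUnion (piAntidiag univ)

theorem mem_latticeSimplex {k : ℕ} {x : ι → ℕ} : x ∈ latticeSimplex ι k ↔ ∑ i, x i ≤ k := by
  simp [latticeSimplex]

theorem card_latticeSimplex_le (k : ℕ) :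
    #(latticeSimplex ι k) ≤ (Fintype.card ι + k).choose k := by
  calc #(latticeSimplex ι k) ≤ ∑ j ∈ range (k + 1), #(piAntidiag (univ : Finset ι) j) :=
        card_biUnion_le
    _ = (Fintype.card ι + k).choose k := by
        simp only [card_piAntidiag_nat, card_univ]
        rw [Nat.sum_range_multichoose, add_comm, Nat.choose_symm_add]

theorem card_Iic_le_two_pow_sum (b : ι → ℕ) : #(Iic b) ≤ 2 ^ ∑ i, b i := by
  rw [Pi.card_Iic, ← prod_pow_eq_pow_sum]
  exact prod_le_prod' fun i _ => (Nat.card_Iic (b i)).trans_le Nat.lt_two_pow_self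

theorem ncard_le_of_forall_eq_add {A : Set (ι → ℕ)} {b : ι → ℕ} {k : ℕ}
    (hA : ∀ z ∈ A, ∃ x y : ι → ℕ, ∑ i, x i ≤ k ∧ y ≤ b ∧ z = x + y) :
    A.ncard ≤ (Fintype.card ι + k).choose k * 2 ^ ∑ i, b i := by
  have hcover : A ⊆ ↑(latticeSimplex ι k + Iic b) := by
    intro z hz
    obtain ⟨x, y, hx, hy, rfl⟩ := hA z hz
    exact mem_coe.2 (add_mem_add (mem_latticeSimplex.2 hx) (mem_Iic.2 hy))
  calc A.ncard ≤ #(latticeSimplex ι k + Iic b) :=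
        (Set.ncard_le_ncard hcover (finite_toSet _)).trans_eq (Set.ncard_coe_finset _)
    _ ≤ #(latticeSimplex ι k) * #(Iic b) := card_add_le
    _ ≤ _ := Nat.mul_le_mul (card_latticeSimplex_le k) (card_Iic_le_two_pow_sum b)

end Counting

theorem stmt12_general (n r s d p t : ℕ) (hs : s = d * r + p)
    (ht : 2 ≤ t) (htr : t ≤ r)
    (A : Set (Fin n → ℕ))
    (htwise : ∀ f : Fin t → (Fin n → ℕ), (∀ j, f j ∈ A) →
      (∑ i, Finset.univ.sup fun j => f j i) ≤ d * t + p)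
    (hnot : ¬ (∀ f : Fin (t - 1) → (Fin n → ℕ), (∀ j, f j ∈ A) →
      (∑ i, Finset.univ.sup fun j => f j i) ≤ d * (t - 1) + p)) :
    ∃ b : Fin n → ℕ, (∑ i, b i) ≤ (t - 1) * s ∧
      (∀ z ∈ A, ∃ x y : Fin n → ℕ, (∑ i, x i) ≤ d - 1 ∧ y ≤ b ∧ z = x + y) ∧
      A.ncard ≤ (n + d - 1).choose (d - 1) * 2 ^ (r * s) := by
  obtain ⟨m, rfl⟩ : ∃ m, t = m + 1 := ⟨t - 1, by omega⟩
  rw [Nat.add_sub_cancel] at hnot ⊢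
  obtain ⟨f, hfA, hf⟩ : ∃ f : Fin m → Fin n → ℕ,
      (∀ j, f j ∈ A) ∧ d * m + p < ∑ i, univ.sup f i := by
    simpa [Finset.sup_apply] using hnot
  set b := univ.sup f
  have hunion : ∀ z ∈ A, ∑ i, b i + ∑ i, (z - b) i ≤ d * m + d + p := fun z hz =>
    (IsTWiseUnion.sum_sup_add_sum_tsub_le htwise hfA hz).trans_eq (by ring)
  have hb : ∑ i, b i ≤ d * m + d + p := le_self_add.trans (hunion _ (hfA ⟨0, by omega⟩))
  have hdecomp : ∀ z ∈ A, ∃ x y : Fin n → ℕ, ∑ i, x i ≤ d - 1 ∧ y ≤ b ∧ z = x + y :=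
    fun z hz => ⟨z - b, z ⊓ b, by have := hunion z hz; omega, inf_le_right,
      funext fun _ => tsub_add_min.symm⟩
  have hbs : ∑ i, b i ≤ m * s := calc
    ∑ i, b i ≤ d * (m + 1) + p := hb.trans_eq (by ring)
    _ ≤ s := by rw [hs]; gcongr
    _ ≤ m * s := Nat.le_mul_of_pos_left s (by omega)
  refine ⟨b, hbs, hdecomp, ?_⟩
  calc A.ncard ≤ (n + (d - 1)).choose (d - 1) * 2 ^ ∑ i, b i := by
        simpa using ncard_le_of_forall_eq_add hdecomp
    _ ≤ (n + d - 1).choose (d - 1) * 2 ^ (r * s) := by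
        rw [← Nat.add_sub_assoc (by omega)]
        gcongr
        · norm_num
        · exact hbs.trans (Nat.mul_le_mul_right s (by omega))

/-- If a down set `A ⊆ ℕⁿ` is `t`-wise `(dt+p)`-union but not `(t-1)`-wise
`(d(t-1)+p)`-union (`2 ≤ t ≤ r`, `s = dr+p`, `p < r`), then there is `b` with
`|b| ≤ (t-1)s` such that every member of `A` is `x + y` with `|x| ≤ d-1` and
`y ≤ b`; consequently `|A| ≤ C(n+d-1, d-1) · 2^{rs}`. -/
theorem stmt12 (n r s d p t : ℕ) (hr : 2 ≤ r) (hp : p < r) (hs : s = d * r + p)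
    (ht : 2 ≤ t) (htr : t ≤ r)
    (A : Set (Fin n → ℕ))
    (hdown : ∀ x ∈ A, ∀ y : Fin n → ℕ, y ≤ x → y ∈ A)
    (htwise : ∀ f : Fin t → (Fin n → ℕ), (∀ j, f j ∈ A) →
      (∑ i, Finset.univ.sup fun j => f j i) ≤ d * t + p)
    (hnot : ¬ (∀ f : Fin (t - 1) → (Fin n → ℕ), (∀ j, f j ∈ A) →
      (∑ i, Finset.univ.sup fun j => f j i) ≤ d * (t - 1) + p)) :
    ∃ b : Fin n → ℕ, (∑ i, b i) ≤ (t - 1) * s ∧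
      (∀ z ∈ A, ∃ x y : Fin n → ℕ, (∑ i, x i) ≤ d - 1 ∧ y ≤ b ∧ z = x + y) ∧
      A.ncard ≤ (n + d - 1).choose (d - 1) * 2 ^ (r * s) :=
  stmt12_general n r s d p t hs ht htr A htwise hnot
end

section
/- For fixed n, r, d and fixed weight |a| = w, the quantity |K(r,n,a,d)| = ∑_{j=0}^{n} C(d+j,j)·σ_{n−j}(a) + ∑_{i=1}^{⌊d/u⌋} ∑_{j=u+1}^{n} (C(d−ui+j, j) − C(d−ui+u, j))·σ_{n−j}(a + i·1), with u = n−r+1, is maximized over all a ∈ ℕⁿ with |a| = w exactly when a is a balanced partition, i.e., |a_i − a_j| ≤ 1 for all i, j. -/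
/-- The `k`-th elementary symmetric polynomial of `a : Fin n → ℕ`. -/
def esym (n k : ℕ) (a : Fin n → ℕ) : ℕ :=
  ∑ K ∈ (Finset.univ : Finset (Fin n)).powersetCard k, ∏ i ∈ K, a i

/-- The cardinality formula for `K(r,n,a,d)` from Lemma 2, with `u = n-r+1`. -/
def Ksize (n r d : ℕ) (a : Fin n → ℕ) : ℕ :=
  (∑ j ∈ Finset.range (n + 1), (d + j).choose j * esym n (n - j) a) +
  ∑ i ∈ Finset.Icc 1 (d / (n - r + 1)),
    ∑ j ∈ Finset.Icc (n - r + 2) n,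
      ((d - (n - r + 1) * i + j).choose j
        - (d - (n - r + 1) * i + (n - r + 1)).choose j) *
        esym n (n - j) (fun t => a t + i)

/-!
Moving one unit from a coordinate `x` to a coordinate `y ≤ x - 2` keeps `x + y` and raises `x * y`,
so it weakly raises every elementary symmetric function of `a`, and of every shift `a + i`, while
strictly raising `σ₂`. All coefficients in `Ksize` are natural numbers and `σ₂` occurs with the
positive coefficient `C(d + n - 2, n - 2)`, so such a move strictly increases `Ksize`. Hence every
maximiser (one exists: there are finitely many vectors of weight `w`) is balanced, and balanced
vectors of equal weight take the same values with the same multiplicities, so they all attain the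
maximum.
-/

namespace Multiset

variable {R : Type*} [CommSemiring R]

@[simp]
theorem esymm_zero (s : Multiset R) : s.esymm 0 = 1 := by
  simp [esymm]

theorem esymm_cons_succ (x : R) (s : Multiset R) (k : ℕ) :
    (x ::ₘ s).esymm (k + 1) = s.esymm (k + 1) + x * s.esymm k := by
  simp only [esymm, powersetCard_cons, map_add, sum_add, map_map, Function.comp_def, prod_cons,
    sum_map_mul_left]

theorem esymm_cons_cons_add_two (x y : R) (s : Multiset R) (k : ℕ) :
    (x ::ₘ y ::ₘ s).esymm (k + 2) =
      s.esymm (k + 2) + (x + y) * s.esymm (k + 1) + x * y * s.esymm k := by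
  rw [esymm_cons_succ, esymm_cons_succ, esymm_cons_succ]
  ring

theorem esymm_cons_cons_le_of_add_eq {x y x' y' : ℕ} (hsum : x' + y' = x + y)
    (hprod : x * y ≤ x' * y') (s : Multiset ℕ) :
    ∀ k, (x ::ₘ y ::ₘ s).esymm k ≤ (x' ::ₘ y' ::ₘ s).esymm k
  | 0 => by simp
  | 1 => by simp only [esymm_cons_succ, esymm_zero]; omega
  | k + 2 => by rw [esymm_cons_cons_add_two, esymm_cons_cons_add_two, hsum]; gcongr

theorem esymm_two_cons_cons_lt_of_add_eq {x y x' y' : ℕ} (hsum : x' + y' = x + y)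
    (hprod : x * y < x' * y') (s : Multiset ℕ) :
    (x ::ₘ y ::ₘ s).esymm 2 < (x' ::ₘ y' ::ₘ s).esymm 2 := by
  rw [esymm_cons_cons_add_two, esymm_cons_cons_add_two, hsum, esymm_zero, mul_one, mul_one]
  omega

theorem eq_replicate_add_replicate_of_le_add_one (s : Multiset ℕ)
    (hs : ∀ x ∈ s, ∀ y ∈ s, x ≤ y + 1) :
    s = replicate (card s - s.sum % card s) (s.sum / card s) +
      replicate (s.sum % card s) (s.sum / card s + 1) := by
  rcases eq_or_ne s 0 with rfl | hne
  · simp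
  obtain ⟨m, hm, hmin⟩ := exists_min_image id hne
  have hvals : ∀ x ∈ s, x = m ∨ x = m + 1 := fun x hx => by
    have := hmin x hx; have := hs x hx m hm; simp only [id] at *; omega
  set c := s.count m
  set t := card (s.filter (· ≠ m))
  have hsplit : s = replicate c m + replicate t (m + 1) := by
    conv_lhs => rw [← filter_add_not (· = m) s, filter_eq']
    congr 1
    refine eq_replicate_card.2 fun x hx => ?_
    obtain ⟨hxs, hxm⟩ := mem_filter.1 hx
    exact (hvals x hxs).resolve_left hxm
  have hcard : card s = c + t := by
    conv_lhs => rw [hsplit]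
    simp
  have hc : 0 < c := count_pos.2 hm
  have hsum : s.sum = card s * m + t := by
    conv_lhs => rw [hsplit]
    simp only [sum_add, sum_replicate, smul_eq_mul, hcard]
    ring
  have hdiv : s.sum / card s = m := by
    rw [hsum, Nat.mul_add_div (by omega), Nat.div_eq_of_lt (by omega), add_zero]
  have hmod : s.sum % card s = t := by
    rw [hsum, Nat.mul_add_mod, Nat.mod_eq_of_lt (by omega)]
  rw [hdiv, hmod, hcard, Nat.add_sub_cancel]
  exact hsplit

end Multiset

theorem Nat.mul_lt_sub_one_mul_add_one {x y : ℕ} (h : y + 2 ≤ x) : x * y < (x - 1) * (y + 1) := by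
  obtain ⟨z, rfl⟩ : ∃ z, x = z + 1 := ⟨x - 1, by omega⟩
  rw [Nat.add_sub_cancel]
  nlinarith

open Finset

section Transfer

variable {ι : Type*} [DecidableEq ι]

def transferUnit (a : ι → ℕ) (i j : ι) : ι → ℕ :=
  Function.update (Function.update a i (a i - 1)) j (a j + 1)

theorem transferUnit_add_const {a : ι → ℕ} {i j : ι} (hi : 1 ≤ a i) (m : ℕ) :
    (fun t => transferUnit a i j t + m) = transferUnit (fun t => a t + m) i j := by
  funext t
  simp only [transferUnit, Function.update_apply]
  split_ifs <;> omega

variable [Fintype ι]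

theorem Finset.map_univ_val_eq_cons_cons {α : Type*} {i j : ι} (hij : i ≠ j) (f : ι → α) :
    univ.val.map f = f i ::ₘ f j ::ₘ ((univ.erase i).erase j).val.map f := by
  have hj : j ∈ (univ.erase i).val := mem_erase.2 ⟨hij.symm, mem_univ j⟩
  rw [← Multiset.map_cons, ← Multiset.map_cons, erase_val _ j, Multiset.cons_erase hj, erase_val,
    Multiset.cons_erase (mem_univ i)]

theorem map_univ_val_transferUnit {i j : ι} (hij : i ≠ j) (a : ι → ℕ) :
    univ.val.map (transferUnit a i j) =
      (a i - 1) ::ₘ (a j + 1) ::ₘ ((univ.erase i).erase j).val.map a := by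
  rw [map_univ_val_eq_cons_cons hij]
  simp only [transferUnit, Function.update_self, Function.update_of_ne hij]
  congr 2
  refine Multiset.map_congr rfl fun t ht => ?_
  rw [mem_val, mem_erase, mem_erase] at ht
  obtain ⟨htj, hti, -⟩ := ht
  rw [Function.update_of_ne htj, Function.update_of_ne hti]

theorem sum_transferUnit {a : ι → ℕ} {i j : ι} (hij : i ≠ j) (hi : 1 ≤ a i) :
    ∑ t, transferUnit a i j t = ∑ t, a t := by
  rw [← sum_map_val, ← sum_map_val, map_univ_val_transferUnit hij, map_univ_val_eq_cons_cons hij]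
  simp only [Multiset.sum_cons]
  omega

end Transfer

theorem map_univ_val_eq_of_le_add_one {ι : Type*} [Fintype ι] {a b : ι → ℕ}
    (ha : ∀ i j, a i ≤ a j + 1) (hb : ∀ i j, b i ≤ b j + 1) (hsum : ∑ t, a t = ∑ t, b t) :
    univ.val.map a = univ.val.map b := by
  have hbal {c : ι → ℕ} (hc : ∀ i j, c i ≤ c j + 1) :
      ∀ x ∈ univ.val.map c, ∀ y ∈ univ.val.map c, x ≤ y + 1 := by
    simp only [Multiset.mem_map]
    rintro _ ⟨i, -, rfl⟩ _ ⟨j, -, rfl⟩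
    exact hc i j
  rw [Multiset.eq_replicate_add_replicate_of_le_add_one _ (hbal ha),
    Multiset.eq_replicate_add_replicate_of_le_add_one _ (hbal hb)]
  simp only [Multiset.card_map, sum_map_val, hsum]

section Ksize

variable {n : ℕ}

theorem esym_eq_esymm_map_univ_val (k : ℕ) (a : Fin n → ℕ) :
    esym n k a = (univ.val.map a).esymm k :=
  (esymm_map_val a univ k).symm

theorem esym_le_esym_transferUnit {a : Fin n → ℕ} {i j : Fin n} (hij : i ≠ j)
    (h : a j + 2 ≤ a i) (k : ℕ) : esym n k a ≤ esym n k (transferUnit a i j) := by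
  rw [esym_eq_esymm_map_univ_val, esym_eq_esymm_map_univ_val, map_univ_val_transferUnit hij,
    map_univ_val_eq_cons_cons hij]
  exact Multiset.esymm_cons_cons_le_of_add_eq (by omega)
    (Nat.mul_lt_sub_one_mul_add_one h).le _ k

theorem esym_two_lt_esym_two_transferUnit {a : Fin n → ℕ} {i j : Fin n} (hij : i ≠ j)
    (h : a j + 2 ≤ a i) : esym n 2 a < esym n 2 (transferUnit a i j) := by
  rw [esym_eq_esymm_map_univ_val, esym_eq_esymm_map_univ_val, map_univ_val_transferUnit hij,
    map_univ_val_eq_cons_cons hij]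
  exact Multiset.esymm_two_cons_cons_lt_of_add_eq (by omega) (Nat.mul_lt_sub_one_mul_add_one h) _

variable {r d : ℕ} {a b : Fin n → ℕ}

theorem ksize_le_ksize (h : ∀ k m, esym n k (fun t => a t + m) ≤ esym n k (fun t => b t + m)) :
    Ksize n r d a ≤ Ksize n r d b := by
  have h0 (k : ℕ) : esym n k a ≤ esym n k b := by simpa using h k 0
  unfold Ksize
  gcongr with i _ j _ <;> apply_assumption

theorem ksize_lt_ksize (hn : 2 ≤ n)
    (h : ∀ k m, esym n k (fun t => a t + m) ≤ esym n k (fun t => b t + m))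
    (h2 : esym n 2 a < esym n 2 b) : Ksize n r d a < Ksize n r d b := by
  have h0 (k : ℕ) : esym n k a ≤ esym n k b := by simpa using h k 0
  unfold Ksize
  refine Nat.add_lt_add_of_lt_of_le (sum_lt_sum (fun j _ => by gcongr; apply h0) ?_) ?_
  · refine ⟨n - 2, mem_range.2 (by omega), ?_⟩
    rw [Nat.sub_sub_self hn]
    exact Nat.mul_lt_mul_of_pos_left h2 (Nat.choose_pos (by omega))
  · gcongr with i _ j _
    apply h

theorem ksize_eq_of_map_univ_val_eq (h : univ.val.map a = univ.val.map b) :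
    Ksize n r d a = Ksize n r d b := by
  have hshift (k m : ℕ) : esym n k (fun t => a t + m) = esym n k (fun t => b t + m) := by
    have hmap (c : Fin n → ℕ) : univ.val.map (fun t => c t + m) = (univ.val.map c).map (· + m) :=
      (Multiset.map_map (· + m) c univ.val).symm
    rw [esym_eq_esymm_map_univ_val, esym_eq_esymm_map_univ_val, hmap, hmap, h]
  exact le_antisymm (ksize_le_ksize fun k m => (hshift k m).le)
    (ksize_le_ksize fun k m => (hshift k m).ge)

theorem ksize_lt_ksize_transferUnit {i j : Fin n} (hij : i ≠ j) (h : a j + 2 ≤ a i) :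
    Ksize n r d a < Ksize n r d (transferUnit a i j) := by
  have hn : 2 ≤ n := by have := i.isLt; have := j.isLt; have := Fin.val_ne_of_ne hij; omega
  refine ksize_lt_ksize hn (fun k m => ?_) (esym_two_lt_esym_two_transferUnit hij h)
  rw [transferUnit_add_const (by omega)]
  exact esym_le_esym_transferUnit hij (by omega) k

theorem le_add_one_of_forall_ksize_le
    (hmax : ∀ a', ∑ t, a' t = ∑ t, a t → Ksize n r d a' ≤ Ksize n r d a) (i j : Fin n) :
    a i ≤ a j + 1 := by
  by_contra! h
  have hij : i ≠ j := by rintro rfl; omega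
  exact (hmax _ (sum_transferUnit hij (by omega))).not_gt (ksize_lt_ksize_transferUnit hij h)

end Ksize

theorem stmt14_general (n r d w : ℕ)
    (a : Fin n → ℕ) (ha : (∑ i, a i) = w) :
    ((∀ a' : Fin n → ℕ, (∑ i, a' i) = w → Ksize n r d a' ≤ Ksize n r d a) ↔
      ∀ i j, |(a i : ℤ) - (a j : ℤ)| ≤ 1) := by
  have balanced_iff {c : Fin n → ℕ} :
      (∀ i j, |(c i : ℤ) - (c j : ℤ)| ≤ 1) ↔ ∀ i j, c i ≤ c j + 1 := by
    refine ⟨fun h i j => ?_, fun h i j => abs_le.2 ⟨?_, ?_⟩⟩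
    · have := (abs_le.1 (h i j)).2; omega
    · have := h j i; omega
    · have := h i j; omega
  rw [balanced_iff]
  refine ⟨fun hmax => le_add_one_of_forall_ksize_le fun a' ha' => hmax a' (ha'.trans ha),
    fun hbal => ?_⟩
  obtain ⟨b, hb, hbmax⟩ := (Nat.antidiagonalTuple n w).exists_max_image (Ksize n r d)
    ⟨a, Nat.mem_antidiagonalTuple.2 ha⟩
  rw [Nat.mem_antidiagonalTuple] at hb
  have hbbal := le_add_one_of_forall_ksize_le (r := r) (d := d) fun a' ha' =>
    hbmax a' (Nat.mem_antidiagonalTuple.2 (ha'.trans hb))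
  have hmap := map_univ_val_eq_of_le_add_one hbal hbbal (ha.trans hb.symm)
  intro a' ha'
  rw [ksize_eq_of_map_univ_val_eq hmap]
  exact hbmax a' (Nat.mem_antidiagonalTuple.2 ha')

/-- For fixed `n, r, d` and fixed weight `w`, `|K(r,n,a,d)|` is maximized over
all `a ∈ ℕⁿ` with `|a| = w` exactly when `a` is a balanced partition. -/
theorem stmt14 (n r d w : ℕ) (hr : 2 ≤ r) (hrn : r ≤ n)
    (a : Fin n → ℕ) (ha : (∑ i, a i) = w) :
    ((∀ a' : Fin n → ℕ, (∑ i, a' i) = w → Ksize n r d a' ≤ Ksize n r d a) ↔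
      ∀ i j, |(a i : ℤ) - (a j : ℤ)| ≤ 1) :=
  stmt14_general n r d w a ha
end

section
/- Let u₁ ≥ u₂ ≥ ⋯ ≥ u_r ≥ 0 be integers with u_j ≤ ⌊d/u⌋ where u = n−r+1 ≥ 1, and let x_j ∈ U(a + u_j·1, d − u·u_j) for j = 1,…,r, where a ∈ ℕⁿ with |a| = s − rd. Then |x₁ ∨ ⋯ ∨ x_r| ≤ |a + u₁·1| + ∑_{j=1}^{r} ((d − u·u_j) − (u₁ − u_j)) = s − (n−r)·∑_{j=2}^{r} u_j ≤ s. -/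
/-!
Put `b = a + u₁·1`. Since `u_j ≤ u₁`, each `x_j = a + u_j·1 + ε_j` exceeds `b` coordinatewise
by at most `(ε_j)_t - (u₁ - u_j)`, so `|x_j \ b| ≤ (d - u·u_j) - (u₁ - u_j)`. The join is bounded
coordinatewise by `b` plus the sum of all the excesses, whence
`|x₁ ∨ ⋯ ∨ x_r| ≤ |a| + n·u₁ + ∑_j ((d - u·u_j) - (u₁ - u_j))`. As `u·u₁ ≤ d`, each summand
equals `d - u₁ - (n - r)·u_j`, and summing over `j` the right-hand side is at most
`|a| + r·d - (n - r)·∑_{j ≥ 2} u_j`.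
-/

open Finset

lemma Finset.sum_tsub_const_le {ι : Type*} (s : Finset ι) (f : ι → ℕ) (c : ℕ) :
    ∑ i ∈ s, (f i - c) ≤ (∑ i ∈ s, f i) - c := by
  induction s using Finset.cons_induction with
  | empty => simp
  | cons a s h ih =>
    rw [sum_cons, sum_cons]
    omega

lemma Finset.sup_le_add_sum_tsub {κ : Type*} (s : Finset κ) (f : κ → ℕ) (b : ℕ) :
    s.sup f ≤ b + ∑ j ∈ s, (f j - b) :=
  Finset.sup_le fun j hj =>
    (le_add_tsub : f j ≤ b + (f j - b)).trans
      (Nat.add_le_add_left (single_le_sum (fun j _ => Nat.zero_le (f j - b)) hj) b)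

lemma sum_sup_le_sum_add_sum_sum_tsub {ι κ : Type*} [Fintype ι] (s : Finset κ)
    (x : κ → ι → ℕ) (b : ι → ℕ) :
    ∑ t, s.sup (fun j => x j t) ≤ ∑ t, b t + ∑ j ∈ s, ∑ t, (x j t - b t) :=
  calc ∑ t, s.sup (fun j => x j t)
      ≤ ∑ t, (b t + ∑ j ∈ s, (x j t - b t)) :=
        sum_le_sum fun t _ => s.sup_le_add_sum_tsub _ (b t)
    _ = ∑ t, b t + ∑ j ∈ s, ∑ t, (x j t - b t) := by
        rw [sum_add_distrib, sum_comm]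

lemma sum_add_const_add_tsub_le {ι : Type*} [Fintype ι] (a ε : ι → ℕ) {i i₁ : ℕ}
    (h : i ≤ i₁) :
    ∑ t, (a t + i + ε t - (a t + i₁)) ≤ (∑ t, ε t) - (i₁ - i) :=
  calc ∑ t, (a t + i + ε t - (a t + i₁))
      = ∑ t, (ε t - (i₁ - i)) := sum_congr rfl fun t _ => by omega
    _ ≤ (∑ t, ε t) - (i₁ - i) := univ.sum_tsub_const_le ε _

lemma tsub_succ_mul_tsub_tsub_add_add_mul {d m v w : ℕ} (hw : (m + 1) * w ≤ d) (hvw : v ≤ w) :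
    (d - (m + 1) * v - (w - v)) + w + m * v = d := by
  have : m * v ≤ m * w := Nat.mul_le_mul_left m hvw
  rw [add_one_mul] at hw ⊢
  omega

theorem stmt17_general (n r s d : ℕ) (hr : 2 ≤ r)
    (a : Fin n → ℕ) (ha : (∑ i, a i) + r * d = s)
    (v : Fin r → ℕ)
    (hanti : ∀ j k : Fin r, j ≤ k → v k ≤ v j)
    (hv : ∀ j, v j ≤ d / (n - r + 1))
    (x : Fin r → (Fin n → ℕ))
    (hx : ∀ j, ∃ ε : Fin n → ℕ, (∑ t, ε t) = d - (n - r + 1) * v j ∧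
      x j = fun t => a t + v j + ε t) :
    (∑ t, Finset.univ.sup fun j => x j t) +
      (n - r) * (∑ j ∈ Finset.univ.filter (fun j : Fin r => (j : ℕ) ≠ 0), v j)
      ≤ s := by
  obtain ⟨k, rfl⟩ : ∃ k, r = k + 1 := ⟨r - 1, by omega⟩
  choose ε hε hxε using hx
  set m := n - (k + 1)
  have hv0 : ∀ j, v j ≤ v 0 := fun j => hanti 0 j (Fin.zero_le j)
  have hvd : ∀ j, (m + 1) * v j ≤ d := fun j => by
    rw [mul_comm]; exact (Nat.le_div_iff_mul_le m.succ_pos).mp (hv j)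
  have hexcess : ∀ j, ∑ t, (x j t - (a t + v 0)) ≤ d - (m + 1) * v j - (v 0 - v j) := by
    intro j
    rw [hxε j, ← hε j]
    exact sum_add_const_add_tsub_le a (ε j) (hv0 j)
  have hbudget : ∑ j, (d - (m + 1) * v j - (v 0 - v j)) + (k + 1) * v 0 + m * ∑ j, v j
      = (k + 1) * d := by
    simpa [sum_add_distrib, mul_sum] using
      sum_congr rfl fun j (_ : j ∈ univ) => tsub_succ_mul_tsub_tsub_add_add_mul (hvd 0) (hv0 j)
  have hsplit : v 0 + ∑ j ∈ univ.filter (fun j : Fin (k + 1) => (j : ℕ) ≠ 0), v j = ∑ j, v j := by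
    simp only [ne_eq, Fin.val_eq_zero_iff, filter_ne', add_sum_erase _ _ (mem_univ _)]
  have hjoin := sum_sup_le_sum_add_sum_sum_tsub univ x (fun t => a t + v 0)
  have hn : n * v 0 ≤ (k + 1) * v 0 + m * v 0 := by
    rw [← add_mul]; exact Nat.mul_le_mul_right _ le_add_tsub
  rw [sum_add_distrib, sum_const, card_univ, Fintype.card_fin, smul_eq_mul] at hjoin
  have := sum_le_sum fun j (_ : j ∈ univ) => hexcess j
  rw [← hsplit, mul_add] at hbudget
  omega

/-- Computational core of Claim 1: if `u₁ ≥ ⋯ ≥ u_r ≥ 0` with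
`u_j ≤ ⌊d/(n-r+1)⌋` and `x_j ∈ U(a + u_j·1, d - (n-r+1)·u_j)` where
`|a| = s - rd`, then `|x₁ ∨ ⋯ ∨ x_r| + (n-r)·∑_{j=2}^{r} u_j ≤ s`
(in particular `|x₁ ∨ ⋯ ∨ x_r| ≤ s`). -/
theorem stmt17 (n r s d : ℕ) (hr : 2 ≤ r) (hrn : r ≤ n)
    (a : Fin n → ℕ) (ha : (∑ i, a i) + r * d = s)
    (v : Fin r → ℕ)
    (hanti : ∀ j k : Fin r, j ≤ k → v k ≤ v j)
    (hv : ∀ j, v j ≤ d / (n - r + 1))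
    (x : Fin r → (Fin n → ℕ))
    (hx : ∀ j, ∃ ε : Fin n → ℕ, (∑ t, ε t) = d - (n - r + 1) * v j ∧
      x j = fun t => a t + v j + ε t) :
    (∑ t, Finset.univ.sup fun j => x j t) +
      (n - r) * (∑ j ∈ Finset.univ.filter (fun j : Fin r => (j : ℕ) ≠ 0), v j)
      ≤ s :=
  stmt17_general n r s d hr a ha v hanti hv x hx
end
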